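/- arXiv:2307.00093 — 5 statements merged into one kernel-verified Lean document; each statement's English description precedes it below -/
import Mathlib

section
/- Fix τ > 0, σ_W > 0, a continuous strictly increasing function ξ: [1,∞) → [0,∞) with ξ(1) = 0 and ξ(Γ) → ∞ as Γ → ∞, and a bounded function σ: [1,∞) → (0,∞). Define β_n(Γ) = 1 - Φ((k·σ(Γ) + √n·(ξ(Γ) - τ))/σ_W) for fixed k ∈ ℝ. Then there exists a unique Γ̃ > 1 with ξ(Γ̃) = τ, and for all Γ < Γ̃, β_n(Γ) → 1, while for all Γ > Γ̃, β_n(Γ) → 0 as n → ∞. -/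
open Filter Topology

noncomputable def Phi (x : ℝ) : ℝ :=
  ∫ t in Set.Iic x, Real.exp (-t ^ 2 / 2) / Real.sqrt (2 * Real.pi)

lemma phi_eq_gauss :
    (fun t : ℝ => Real.exp (-t ^ 2 / 2) / Real.sqrt (2 * Real.pi))
      = ProbabilityTheory.gaussianPDFReal 0 1 := by
  funext t
  simp [ProbabilityTheory.gaussianPDFReal, div_eq_mul_inv, mul_comm]

lemma gauss_integrable :
    MeasureTheory.Integrable (fun t : ℝ => Real.exp (-t ^ 2 / 2) / Real.sqrt (2 * Real.pi)) := by
  rw [phi_eq_gauss]; exact ProbabilityTheory.integrable_gaussianPDFReal 0 1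

lemma gauss_integral :
    (∫ t : ℝ, Real.exp (-t ^ 2 / 2) / Real.sqrt (2 * Real.pi)) = 1 := by
  rw [phi_eq_gauss]; exact ProbabilityTheory.integral_gaussianPDFReal_eq_one 0 one_ne_zero

lemma Phi_tendsto_atTop : Tendsto Phi atTop (𝓝 1) := by
  have := (MeasureTheory.aecover_Iic (μ := MeasureTheory.volume) (l := atTop)
    (b := id) tendsto_id).integral_tendsto_of_countably_generated gauss_integrable
  rwa [gauss_integral] at this

lemma Phi_tendsto_atBot : Tendsto Phi atBot (𝓝 0) := by
  have h1 := (MeasureTheory.aecover_Ioi (μ := MeasureTheory.volume) (l := atBot)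
    (a := id) tendsto_id).integral_tendsto_of_countably_generated gauss_integrable
  rw [gauss_integral] at h1
  have heq : ∀ x : ℝ, Phi x =
      1 - ∫ t in Set.Ioi x, Real.exp (-t ^ 2 / 2) / Real.sqrt (2 * Real.pi) := by
    intro x
    have := intervalIntegral.integral_Iic_add_Ioi (μ := MeasureTheory.volume) (b := x)
      gauss_integrable.integrableOn gauss_integrable.integrableOn
    rw [gauss_integral] at this
    simp only [Phi]
    linarith
  have : Tendsto (fun x : ℝ => 1 - ∫ t in Set.Ioi x,
      Real.exp (-t ^ 2 / 2) / Real.sqrt (2 * Real.pi)) atBot (𝓝 (1 - 1)) :=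
    tendsto_const_nhds.sub h1
  simp only [sub_self] at this
  exact this.congr fun x => (heq x).symm

lemma sqrt_nat_tendsto : Tendsto (fun n : ℕ => Real.sqrt n) atTop atTop := by
  have h : Tendsto Real.sqrt atTop atTop := by
    have := tendsto_rpow_atTop (y := (1:ℝ)/2) (by norm_num)
    refine this.congr' ?_
    filter_upwards [eventually_ge_atTop (0:ℝ)] with x hx
    exact (Real.sqrt_eq_rpow x).symm
  exact h.comp tendsto_natCast_atTop_atTop

set_option maxHeartbeats 1000000 in
theorem stmt_9 (τ σW k : ℝ) (hτ : 0 < τ) (hσW : 0 < σW)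
    (ξ σ : ℝ → ℝ)
    (hξcont : ContinuousOn ξ (Set.Ici 1))
    (hξmono : StrictMonoOn ξ (Set.Ici 1))
    (hξ1 : ξ 1 = 0) (hξnonneg : ∀ Γ ≥ (1 : ℝ), 0 ≤ ξ Γ)
    (hξtop : Tendsto ξ atTop atTop)
    (hσpos : ∀ Γ ≥ (1 : ℝ), 0 < σ Γ)
    (hσbdd : ∃ C : ℝ, ∀ Γ ≥ (1 : ℝ), σ Γ ≤ C) :
    ∃ Γt : ℝ, (1 < Γt ∧ ξ Γt = τ) ∧
      (∀ Γ' : ℝ, 1 < Γ' → ξ Γ' = τ → Γ' = Γt) ∧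
      (∀ Γ : ℝ, 1 ≤ Γ → Γ < Γt →
        Tendsto (fun n : ℕ =>
          1 - Phi ((k * σ Γ + Real.sqrt n * (ξ Γ - τ)) / σW)) atTop (𝓝 1)) ∧
      (∀ Γ : ℝ, Γt < Γ →
        Tendsto (fun n : ℕ =>
          1 - Phi ((k * σ Γ + Real.sqrt n * (ξ Γ - τ)) / σW)) atTop (𝓝 0)) := by
  obtain ⟨B, hBτ, hB1⟩ :=
    ((hξtop.eventually (eventually_ge_atTop τ)).and (eventually_ge_atTop (1:ℝ))).exists
  obtain ⟨Γt, hΓtmem, hΓtval⟩ :=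
    intermediate_value_Icc hB1 (hξcont.mono (Set.Icc_subset_Ici_self))
      (by rw [hξ1]; exact ⟨hτ.le, hBτ⟩)
  have hΓt1 : 1 ≤ Γt := hΓtmem.1
  have hΓtgt : 1 < Γt := by
    rcases lt_or_eq_of_le hΓt1 with h | h
    · exact h
    · exfalso; rw [← h, hξ1] at hΓtval; exact hτ.ne hΓtval
  refine ⟨Γt, ⟨hΓtgt, hΓtval⟩, ?_, ?_, ?_⟩
  · intro Γ' hΓ' hval
    exact hξmono.injOn (Set.mem_Ici.mpr hΓ'.le) (Set.mem_Ici.mpr hΓt1) (hval.trans hΓtval.symm)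
  · intro Γ hΓ1 hΓlt
    have hc : ξ Γ - τ < 0 := by
      have := hξmono (Set.mem_Ici.mpr hΓ1) (Set.mem_Ici.mpr hΓt1) hΓlt
      rw [hΓtval] at this; linarith
    have h3 : Tendsto (fun n : ℕ => (k * σ Γ + Real.sqrt n * (ξ Γ - τ)) / σW) atTop atBot :=
      (tendsto_atBot_add_const_left _ _ (sqrt_nat_tendsto.atTop_mul_const_of_neg hc)).atBot_div_const hσW
    have h4 := Phi_tendsto_atBot.comp h3
    have h5 : Tendsto (fun n : ℕ =>
        1 - Phi ((k * σ Γ + Real.sqrt n * (ξ Γ - τ)) / σW)) atTop (𝓝 (1 - 0)) :=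
      tendsto_const_nhds.sub h4
    simpa using h5
  · intro Γ hΓgt
    have hc : 0 < ξ Γ - τ := by
      have := hξmono (Set.mem_Ici.mpr hΓt1) (Set.mem_Ici.mpr (hΓt1.trans hΓgt.le)) hΓgt
      rw [hΓtval] at this; linarith
    have h3 : Tendsto (fun n : ℕ => (k * σ Γ + Real.sqrt n * (ξ Γ - τ)) / σW) atTop atTop :=
      (tendsto_atTop_add_const_left _ _ (sqrt_nat_tendsto.atTop_mul_const hc)).atTop_div_const hσW
    have h4 := Phi_tendsto_atTop.comp h3
    have h5 : Tendsto (fun n : ℕ =>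
        1 - Phi ((k * σ Γ + Real.sqrt n * (ξ Γ - τ)) / σW)) atTop (𝓝 (1 - 1)) :=
      tendsto_const_nhds.sub h4
    simpa using h5
end

section
/- Let Y₁ ≥ Y₂ ≥ ... ≥ Y_m be reals, w₁,...,w_m > 0, and Λ ≥ 1. Then max over a ∈ {0,...,m} of the ratio (Σ_{i≤a} Λw_iY_i + Σ_{i>a} Λ^{-1}w_iY_i)/(Σ_{i≤a} Λw_i + Σ_{i>a} Λ^{-1}w_i) equals the maximum over all weight vectors w̃ with Λ^{-1}w_i ≤ w̃_i ≤ Λw_i of (Σ_i w̃_iY_i)/(Σ_i w̃_i). -/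
open Finset

theorem stmt_10 (m : ℕ) (hm : 0 < m) (Y w : Fin m → ℝ)
    (hY : ∀ i j : Fin m, i ≤ j → Y j ≤ Y i) (hw : ∀ i, 0 < w i)
    (Λ : ℝ) (hΛ : 1 ≤ Λ) :
    IsGreatest
      {r : ℝ | ∃ wt : Fin m → ℝ,
        (∀ i, Λ⁻¹ * w i ≤ wt i ∧ wt i ≤ Λ * w i) ∧
        r = (∑ i, wt i * Y i) / (∑ i, wt i)}
      ((Finset.range (m + 1)).sup' ⟨0, Finset.mem_range.mpr (Nat.succ_pos m)⟩
        (fun a =>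
          (∑ i : Fin m, (if (i : ℕ) < a then Λ else Λ⁻¹) * w i * Y i) /
            (∑ i : Fin m, (if (i : ℕ) < a then Λ else Λ⁻¹) * w i))) := by
  have hne : Nonempty (Fin m) := ⟨⟨0, hm⟩⟩
  have hΛ0 : (0:ℝ) < Λ := lt_of_lt_of_le one_pos hΛ
  have hΛi : (0:ℝ) < Λ⁻¹ := inv_pos.mpr hΛ0
  have hΛiΛ : Λ⁻¹ ≤ Λ := le_trans (inv_le_one_of_one_le₀ hΛ) hΛ
  set c : ℕ → Fin m → ℝ := fun a i => (if (i:ℕ) < a then Λ else Λ⁻¹) * w i with hc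
  have hcpos : ∀ a i, 0 < c a i := by
    intro a i; dsimp [c]; split
    · exact mul_pos hΛ0 (hw i)
    · exact mul_pos hΛi (hw i)
  have hgpos : ∀ a, 0 < ∑ i, c a i := fun a =>
    Finset.sum_pos (fun i _ => hcpos a i) univ_nonempty
  set S := ((Finset.range (m + 1)).sup' ⟨0, Finset.mem_range.mpr (Nat.succ_pos m)⟩
        (fun a =>
          (∑ i : Fin m, (if (i : ℕ) < a then Λ else Λ⁻¹) * w i * Y i) /
            (∑ i : Fin m, (if (i : ℕ) < a then Λ else Λ⁻¹) * w i))) with hS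
  constructor
  · obtain ⟨a, ha, hEq⟩ := Finset.exists_mem_eq_sup'
      (⟨0, Finset.mem_range.mpr (Nat.succ_pos m)⟩ : (Finset.range (m+1)).Nonempty)
      (fun a =>
          (∑ i : Fin m, (if (i : ℕ) < a then Λ else Λ⁻¹) * w i * Y i) /
            (∑ i : Fin m, (if (i : ℕ) < a then Λ else Λ⁻¹) * w i))
    refine ⟨c a, fun i => ?_, ?_⟩
    · dsimp [c]; split
      · exact ⟨mul_le_mul_of_nonneg_right hΛiΛ (hw i).le, le_refl _⟩
      · exact ⟨le_refl _, mul_le_mul_of_nonneg_right hΛiΛ (hw i).le⟩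
    · rw [hS, hEq]
  · rintro r ⟨wt, hwt, rfl⟩
    have hub : ∀ a ∈ Finset.range (m+1),
        (∑ i, c a i * Y i) / (∑ i, c a i) ≤ S := by
      intro a ha
      rw [hS]
      have := Finset.le_sup' (f := fun a =>
          (∑ i : Fin m, (if (i : ℕ) < a then Λ else Λ⁻¹) * w i * Y i) /
            (∑ i : Fin m, (if (i : ℕ) < a then Λ else Λ⁻¹) * w i)) ha
      simpa only [c, mul_assoc] using this
    have hwtpos : ∀ i, 0 < wt i := fun i =>
      lt_of_lt_of_le (mul_pos hΛi (hw i)) (hwt i).1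
    have hWpos : 0 < ∑ i, wt i := Finset.sum_pos (fun i _ => hwtpos i) univ_nonempty
    set a := (Finset.univ.filter (fun i : Fin m => S < Y i)).card with hadef
    have ham : a ∈ Finset.range (m+1) := by
      rw [Finset.mem_range, Nat.lt_succ_iff]
      calc a ≤ Finset.univ.card := Finset.card_filter_le _ _
        _ = m := by simp
    have hiff : ∀ i : Fin m, (i:ℕ) < a ↔ S < Y i := by
      intro i
      constructor
      · intro hia
        by_contra h
        push_neg at h
        have hsub : (Finset.univ.filter (fun j : Fin m => S < Y j)) ⊆ Finset.Iio i := by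
          intro j hj
          rw [Finset.mem_filter] at hj
          rw [Finset.mem_Iio]
          by_contra hji
          push_neg at hji
          exact absurd (lt_of_lt_of_le hj.2 (le_trans (hY i j hji) h)) (lt_irrefl S)
        have := Finset.card_le_card hsub
        rw [Fin.card_Iio] at this
        omega
      · intro hi
        have hsub : Finset.Iic i ⊆ (Finset.univ.filter (fun j : Fin m => S < Y j)) := by
          intro j hj
          rw [Finset.mem_Iic] at hj
          rw [Finset.mem_filter]
          exact ⟨Finset.mem_univ _, lt_of_lt_of_le hi (hY j i hj)⟩
        have := Finset.card_le_card hsub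
        rw [Fin.card_Iic] at this
        omega
    have key : ∀ i : Fin m, (Y i - S) * wt i ≤ (Y i - S) * c a i := by
      intro i
      dsimp [c]
      by_cases hia : (i:ℕ) < a
      · rw [if_pos hia]
        have hYi : S < Y i := (hiff i).mp hia
        exact mul_le_mul_of_nonneg_left (hwt i).2 (by linarith)
      · rw [if_neg hia]
        have hYi : Y i ≤ S := by
          by_contra h; push_neg at h; exact hia ((hiff i).mpr h)
        exact mul_le_mul_of_nonpos_left (hwt i).1 (by linarith)
    have hsum : ∑ i, (Y i - S) * wt i ≤ ∑ i, (Y i - S) * c a i :=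
      Finset.sum_le_sum (fun i _ => key i)
    have hfa : ∑ i, c a i * Y i ≤ S * (∑ i, c a i) := by
      have := hub a ham
      rwa [div_le_iff₀ (hgpos a)] at this
    have h1 : ∑ i, (Y i - S) * c a i = (∑ i, c a i * Y i) - S * (∑ i, c a i) := by
      rw [Finset.mul_sum, ← Finset.sum_sub_distrib]
      exact Finset.sum_congr rfl (fun i _ => by ring)
    have h2 : ∑ i, (Y i - S) * wt i = (∑ i, wt i * Y i) - S * (∑ i, wt i) := by
      rw [Finset.mul_sum, ← Finset.sum_sub_distrib]
      exact Finset.sum_congr rfl (fun i _ => by ring)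
    rw [div_le_iff₀ hWpos]
    have : ∑ i, (Y i - S) * c a i ≤ 0 := by rw [h1]; linarith
    rw [h2] at hsum
    linarith
end

section
/- Let w, Y be square-integrable random variables with w > 0, and let m > 0 with P(w < m) > 0 and E[w | w < m] = 1. Suppose w* is square-integrable with E[w* · 1{w < m} | X] = w · 1{w < m} in the sense that E[(w - w*)·h(w)·1{w<m}] = 0 for measurable h, and E[w* | w < m] = 1. Then E[(w - w*)·Y | w < m] = cov(w - w*, Y | w < m), and |E[(w - w*)Y | w < m]| ≤ √(1 - cor(w, Y | w<m)²)·√(var(w - w* | w<m)·var(Y | w<m)). -/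
/-!
Let `e = w - w*` on the trimmed region. It has mean `0` (both weights have conditional mean `1`)
and is orthogonal to `w` (take `h = id`), so `E[e Y] = cov(e, Y)` and `cov(e, w) = 0`. Hence
`cov(e, Y) = cov(e, R)` for the residual `R = Y - β w` of the regression of `Y` on `w`, whose
variance is `(1 - cor(w, Y)²) var Y`; Cauchy–Schwarz for `cov(e, R)` gives the bound.
-/

open MeasureTheory ProbabilityTheory

namespace ProbabilityTheory

variable {Ω : Type*} [MeasurableSpace Ω] {μ : Measure Ω} {E W X Y : Ω → ℝ}

theorem _root_.MeasureTheory.MemLp.cond {p : ENNReal} (hX : MemLp X p μ) (s : Set Ω) :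
    MemLp X p μ[|s] := by
  by_cases hs : μ s = 0
  · simp [cond_eq_zero_of_meas_eq_zero hs]
  · exact (hX.restrict s).smul_measure (ENNReal.inv_ne_top.mpr hs)

-- `Var[X - t • Y] ≥ 0` for every `t`, so this quadratic in `t` has a nonpositive discriminant.
theorem sq_covariance_le_variance_mul_variance [IsFiniteMeasure μ] (hX : MemLp X 2 μ)
    (hY : MemLp Y 2 μ) : cov[X, Y; μ] ^ 2 ≤ Var[X; μ] * Var[Y; μ] := by
  have hquad : ∀ t : ℝ, 0 ≤ Var[Y; μ] * (t * t) + (-2 * cov[X, Y; μ]) * t + Var[X; μ] := by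
    intro t
    have := variance_nonneg (X - t • Y) μ
    rw [variance_sub hX (hY.const_smul t), variance_smul, covariance_smul_right] at this
    linarith
  have := discrim_le_zero hquad
  rw [discrim] at this
  linarith

theorem abs_covariance_le_sqrt_variance_mul_variance [IsFiniteMeasure μ] (hX : MemLp X 2 μ)
    (hY : MemLp Y 2 μ) : |cov[X, Y; μ]| ≤ √(Var[X; μ] * Var[Y; μ]) :=
  Real.abs_le_sqrt (sq_covariance_le_variance_mul_variance hX hY)

/-- Junk value `0` when either variance vanishes. -/
noncomputable def correlation (X Y : Ω → ℝ) (μ : Measure Ω) : ℝ :=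
  cov[X, Y; μ] / (√Var[X; μ] * √Var[Y; μ])

theorem sq_correlation :
    correlation X Y μ ^ 2 = cov[X, Y; μ] ^ 2 / (Var[X; μ] * Var[Y; μ]) := by
  rw [correlation, div_pow, mul_pow, Real.sq_sqrt (variance_nonneg _ _),
    Real.sq_sqrt (variance_nonneg _ _)]

theorem sq_correlation_le_one [IsFiniteMeasure μ] (hX : MemLp X 2 μ) (hY : MemLp Y 2 μ) :
    correlation X Y μ ^ 2 ≤ 1 := by
  rw [sq_correlation]
  exact div_le_one_of_le₀ (sq_covariance_le_variance_mul_variance hX hY)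
    (mul_nonneg (variance_nonneg _ _) (variance_nonneg _ _))

noncomputable def regressionResidual (W Y : Ω → ℝ) (μ : Measure Ω) : Ω → ℝ :=
  Y - (cov[W, Y; μ] / Var[W; μ]) • W

theorem _root_.MeasureTheory.MemLp.regressionResidual (hW : MemLp W 2 μ) (hY : MemLp Y 2 μ) :
    MemLp (regressionResidual W Y μ) 2 μ :=
  hY.sub (hW.const_smul _)

theorem covariance_regressionResidual_right [IsFiniteMeasure μ] (hE : MemLp E 2 μ)
    (hW : MemLp W 2 μ) (hY : MemLp Y 2 μ) (hEW : cov[E, W; μ] = 0) :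
    cov[E, regressionResidual W Y μ; μ] = cov[E, Y; μ] := by
  rw [regressionResidual, covariance_sub_right hE hY (hW.const_smul _), covariance_smul_right,
    hEW, mul_zero, sub_zero]

theorem variance_regressionResidual [IsFiniteMeasure μ] (hW : MemLp W 2 μ) (hY : MemLp Y 2 μ) :
    Var[regressionResidual W Y μ; μ] = (1 - correlation W Y μ ^ 2) * Var[Y; μ] := by
  rw [regressionResidual, variance_sub hY (hW.const_smul _), variance_smul,
    covariance_smul_right, covariance_comm Y W, sq_correlation]
  rcases eq_or_ne (Var[W; μ] * Var[Y; μ]) 0 with hdeg | hdeg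
  · have hcov : cov[W, Y; μ] = 0 := by
      have := sq_covariance_le_variance_mul_variance hW hY
      rw [hdeg] at this
      exact pow_eq_zero_iff two_ne_zero |>.mp (le_antisymm this (sq_nonneg _))
    simp [hcov]
  · have hW0 : Var[W; μ] ≠ 0 := left_ne_zero_of_mul hdeg
    have hY0 : Var[Y; μ] ≠ 0 := right_ne_zero_of_mul hdeg
    field_simp
    ring

/-- The partial correlation inequality. -/
theorem abs_covariance_le_of_covariance_eq_zero [IsFiniteMeasure μ] (hE : MemLp E 2 μ)
    (hW : MemLp W 2 μ) (hY : MemLp Y 2 μ) (hEW : cov[E, W; μ] = 0) :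
    |cov[E, Y; μ]| ≤ √(1 - correlation W Y μ ^ 2) * √(Var[E; μ] * Var[Y; μ]) := by
  calc |cov[E, Y; μ]| = |cov[E, regressionResidual W Y μ; μ]| := by
        rw [covariance_regressionResidual_right hE hW hY hEW]
    _ ≤ √(Var[E; μ] * Var[regressionResidual W Y μ; μ]) :=
        abs_covariance_le_sqrt_variance_mul_variance hE (hW.regressionResidual hY)
    _ = √(1 - correlation W Y μ ^ 2) * √(Var[E; μ] * Var[Y; μ]) := by
        rw [variance_regressionResidual hW hY,
          ← Real.sqrt_mul (sub_nonneg.mpr (sq_correlation_le_one hW hY))]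
        ring_nf

end ProbabilityTheory

theorem stmt_14_general {Ω : Type*} [MeasurableSpace Ω] (μ : Measure Ω) [IsProbabilityMeasure μ]
    (w Y wstar : Ω → ℝ) (m : ℝ)
    (hw : MemLp w 2 μ) (hY : MemLp Y 2 μ) (hws : MemLp wstar 2 μ)
    (hA : μ {ω | w ω < m} ≠ 0)
    (hmean1 : ∫ ω, w ω ∂(μ[|{ω | w ω < m}]) = 1)
    (hmeanstar : ∫ ω, wstar ω ∂(μ[|{ω | w ω < m}]) = 1)
    (horth : ∀ h : ℝ → ℝ, Measurable h →
      ∫ ω, (w ω - wstar ω) * h (w ω) ∂(μ[|{ω | w ω < m}]) = 0) :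
    let μ' := μ[|{ω | w ω < m}]
    let cov : (Ω → ℝ) → (Ω → ℝ) → ℝ := fun X Z =>
      (∫ ω, X ω * Z ω ∂μ') - (∫ ω, X ω ∂μ') * (∫ ω, Z ω ∂μ')
    let cor : (Ω → ℝ) → (Ω → ℝ) → ℝ := fun X Z =>
      cov X Z / (Real.sqrt (variance X μ') * Real.sqrt (variance Z μ'))
    (∫ ω, (w ω - wstar ω) * Y ω ∂μ') = cov (fun ω => w ω - wstar ω) Y ∧
    |∫ ω, (w ω - wstar ω) * Y ω ∂μ'| ≤
      Real.sqrt (1 - (cor w Y) ^ 2) *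
        Real.sqrt (variance (fun ω => w ω - wstar ω) μ' * variance Y μ') := by
  intro μ' cov cor
  have : IsProbabilityMeasure μ' := cond_isProbabilityMeasure hA
  have hw' := hw.cond {ω | w ω < m}
  have hY' := hY.cond {ω | w ω < m}
  have he' : MemLp (fun ω => w ω - wstar ω) 2 μ' := hw'.sub (hws.cond _)
  have hcov {X Z : Ω → ℝ} (hX : MemLp X 2 μ') (hZ : MemLp Z 2 μ') : cov X Z = cov[X, Z; μ'] :=
    (covariance_eq_sub hX hZ).symm
  have he_mean : ∫ ω, (w ω - wstar ω) ∂μ' = 0 := by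
    rw [integral_sub (hw'.integrable one_le_two) ((hws.cond _).integrable one_le_two), hmean1,
      hmeanstar, sub_self]
  have heY : ∫ ω, (w ω - wstar ω) * Y ω ∂μ' = cov (fun ω => w ω - wstar ω) Y := by
    simp only [cov, he_mean, zero_mul, sub_zero]
  have hew : cov[fun ω => w ω - wstar ω, w; μ'] = 0 := by
    rw [← hcov he' hw']
    simp only [cov, he_mean, zero_mul, sub_zero]
    exact horth id measurable_id
  have hcor : cor w Y = correlation w Y μ' := by
    simp only [cor, correlation, hcov hw' hY']
  refine ⟨heY, ?_⟩
  rw [heY, hcov he' hY', hcor]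
  exact abs_covariance_le_of_covariance_eq_zero he' hw' hY' hew

theorem stmt_14 {Ω : Type*} [MeasurableSpace Ω] (μ : Measure Ω) [IsProbabilityMeasure μ]
    (w Y wstar : Ω → ℝ) (m : ℝ) (hm : 0 < m)
    (hw : MemLp w 2 μ) (hY : MemLp Y 2 μ) (hws : MemLp wstar 2 μ)
    (hwmeas : Measurable w) (hwpos : ∀ ω, 0 < w ω)
    (hA : μ {ω | w ω < m} ≠ 0)
    (hmean1 : ∫ ω, w ω ∂(μ[|{ω | w ω < m}]) = 1)
    (hmeanstar : ∫ ω, wstar ω ∂(μ[|{ω | w ω < m}]) = 1)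
    (horth : ∀ h : ℝ → ℝ, Measurable h →
      ∫ ω, (w ω - wstar ω) * h (w ω) ∂(μ[|{ω | w ω < m}]) = 0) :
    let μ' := μ[|{ω | w ω < m}]
    let cov : (Ω → ℝ) → (Ω → ℝ) → ℝ := fun X Z =>
      (∫ ω, X ω * Z ω ∂μ') - (∫ ω, X ω ∂μ') * (∫ ω, Z ω ∂μ')
    let cor : (Ω → ℝ) → (Ω → ℝ) → ℝ := fun X Z =>
      cov X Z / (Real.sqrt (variance X μ') * Real.sqrt (variance Z μ'))
    (∫ ω, (w ω - wstar ω) * Y ω ∂μ') = cov (fun ω => w ω - wstar ω) Y ∧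
    |∫ ω, (w ω - wstar ω) * Y ω ∂μ'| ≤
      Real.sqrt (1 - (cor w Y) ^ 2) *
        Real.sqrt (variance (fun ω => w ω - wstar ω) μ' * variance Y μ') :=
  stmt_14_general μ w Y wstar m hw hY hws hA hmean1 hmeanstar horth
end

section
/- Let w̃ satisfy Λ^{-1}w ≤ w̃ ≤ Λw pointwise for Λ ≥ 1 and w > 0 integrable with wY integrable. Then the weighted mean μ(w̃) = E[w̃Y]/E[w̃] satisfies μ(w̃) ≤ max over upper level sets A = {Y ≥ c} of (Λ·E[wY·1_A] + Λ^{-1}·E[wY·1_{Aᶜ}])/(Λ·E[w·1_A] + Λ^{-1}·E[w·1_{Aᶜ}]). -/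
open MeasureTheory

theorem stmt_18 {Ω : Type*} [MeasurableSpace Ω] (μ : Measure Ω) [IsProbabilityMeasure μ]
    (w Y wt : Ω → ℝ) (Λ : ℝ) (hΛ : 1 ≤ Λ)
    (hwmeas : Measurable w) (hYmeas : Measurable Y) (hwtmeas : Measurable wt)
    (hwpos : ∀ ω, 0 < w ω)
    (hwint : Integrable w μ) (hwYint : Integrable (fun ω => w ω * Y ω) μ)
    (hEw : 0 < ∫ ω, w ω ∂μ)
    (hbox : ∀ ω, Λ⁻¹ * w ω ≤ wt ω ∧ wt ω ≤ Λ * w ω) :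
    (∫ ω, wt ω * Y ω ∂μ) / (∫ ω, wt ω ∂μ) ≤
      ⨆ c : ℝ,
        (Λ * (∫ ω in {ω | c ≤ Y ω}, w ω * Y ω ∂μ) +
            Λ⁻¹ * (∫ ω in {ω | Y ω < c}, w ω * Y ω ∂μ)) /
          (Λ * (∫ ω in {ω | c ≤ Y ω}, w ω ∂μ) +
            Λ⁻¹ * (∫ ω in {ω | Y ω < c}, w ω ∂μ)) := by
  have hΛ0 : (0:ℝ) < Λ := lt_of_lt_of_le one_pos hΛ
  have hΛi : (0:ℝ) < Λ⁻¹ := inv_pos.mpr hΛ0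
  have hΛiΛ : Λ⁻¹ ≤ Λ := le_trans (inv_le_one_of_one_le₀ hΛ) hΛ
  have hwtpos : ∀ ω, 0 < wt ω := fun ω =>
    lt_of_lt_of_le (mul_pos hΛi (hwpos ω)) (hbox ω).1
  have hA : ∀ c : ℝ, MeasurableSet {ω | c ≤ Y ω} := fun c =>
    measurableSet_le measurable_const hYmeas
  have hcompl : ∀ c : ℝ, {ω | Y ω < c} = {ω | c ≤ Y ω}ᶜ := fun c => by
    ext ω; simp [not_le]
  -- integrability of wt and wt * Y
  have hwtint : Integrable wt μ := by
    refine (hwint.const_mul Λ).mono hwtmeas.aestronglyMeasurable ?_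
    filter_upwards with ω
    rw [Real.norm_eq_abs, Real.norm_eq_abs, abs_of_pos (hwtpos ω),
      abs_of_pos (mul_pos hΛ0 (hwpos ω))]
    exact (hbox ω).2
  have hwtYint : Integrable (fun ω => wt ω * Y ω) μ := by
    refine (hwYint.const_mul Λ).mono (hwtmeas.mul hYmeas).aestronglyMeasurable ?_
    filter_upwards with ω
    rw [Real.norm_eq_abs, Real.norm_eq_abs, abs_mul, abs_mul, abs_mul,
      abs_of_pos (hwtpos ω), abs_of_pos hΛ0, abs_of_pos (hwpos ω), ← mul_assoc]
    exact mul_le_mul_of_nonneg_right (hbox ω).2 (abs_nonneg _)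
  set T := ∫ ω, wt ω * Y ω ∂μ with hTdef
  set S := ∫ ω, wt ω ∂μ with hSdef
  have hS : 0 < S := by
    have h1 : Λ⁻¹ * ∫ ω, w ω ∂μ ≤ S := by
      rw [← integral_const_mul]
      exact integral_mono (hwint.const_mul Λ⁻¹) hwtint fun ω => (hbox ω).1
    exact lt_of_lt_of_le (mul_pos hΛi hEw) h1
  set t := T / S with htdef
  -- abbreviations
  set N : ℝ → ℝ := fun c =>
    Λ * (∫ ω in {ω | c ≤ Y ω}, w ω * Y ω ∂μ) +
      Λ⁻¹ * (∫ ω in {ω | c ≤ Y ω}ᶜ, w ω * Y ω ∂μ) with hNdef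
  set D : ℝ → ℝ := fun c =>
    Λ * (∫ ω in {ω | c ≤ Y ω}, w ω ∂μ) +
      Λ⁻¹ * (∫ ω in {ω | c ≤ Y ω}ᶜ, w ω ∂μ) with hDdef
  have habsint : Integrable (fun ω => w ω * |Y ω|) μ := by
    have h := hwYint.abs
    have he : (fun ω => |w ω * Y ω|) = fun ω => w ω * |Y ω| :=
      funext fun ω => by rw [abs_mul, abs_of_pos (hwpos ω)]
    rwa [he] at h
  -- lower bound on denominators
  have hDge : ∀ c : ℝ, Λ⁻¹ * ∫ ω, w ω ∂μ ≤ D c := by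
    intro c
    have hsplit : (∫ ω in {ω | c ≤ Y ω}, w ω ∂μ) + (∫ ω in {ω | c ≤ Y ω}ᶜ, w ω ∂μ)
        = ∫ ω, w ω ∂μ := integral_add_compl (hA c) hwint
    have h1 : 0 ≤ ∫ ω in {ω | c ≤ Y ω}, w ω ∂μ :=
      setIntegral_nonneg (hA c) fun ω _ => (hwpos ω).le
    simp only [hDdef]
    nlinarith [h1]
  have hD : ∀ c : ℝ, 0 < D c := fun c =>
    lt_of_lt_of_le (mul_pos hΛi hEw) (hDge c)
  -- bounded above
  have hbdd : BddAbove (Set.range fun c => N c / D c) := by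
    refine ⟨(Λ * ∫ ω, w ω * |Y ω| ∂μ) / (Λ⁻¹ * ∫ ω, w ω ∂μ), ?_⟩
    rintro _ ⟨c, rfl⟩
    have hsplit : (∫ ω in {ω | c ≤ Y ω}, w ω * |Y ω| ∂μ)
        + (∫ ω in {ω | c ≤ Y ω}ᶜ, w ω * |Y ω| ∂μ) = ∫ ω, w ω * |Y ω| ∂μ :=
      integral_add_compl (hA c) habsint
    have h1 : (∫ ω in {ω | c ≤ Y ω}, w ω * Y ω ∂μ)
        ≤ ∫ ω in {ω | c ≤ Y ω}, w ω * |Y ω| ∂μ :=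
      setIntegral_mono_on hwYint.integrableOn habsint.integrableOn (hA c)
        fun ω _ => mul_le_mul_of_nonneg_left (le_abs_self _) (hwpos ω).le
    have h2 : (∫ ω in {ω | c ≤ Y ω}ᶜ, w ω * Y ω ∂μ)
        ≤ ∫ ω in {ω | c ≤ Y ω}ᶜ, w ω * |Y ω| ∂μ :=
      setIntegral_mono_on hwYint.integrableOn habsint.integrableOn (hA c).compl
        fun ω _ => mul_le_mul_of_nonneg_left (le_abs_self _) (hwpos ω).le
    have h3 : 0 ≤ ∫ ω in {ω | c ≤ Y ω}ᶜ, w ω * |Y ω| ∂μ :=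
      setIntegral_nonneg (hA c).compl fun ω _ => mul_nonneg (hwpos ω).le (abs_nonneg _)
    have h4 : 0 ≤ ∫ ω in {ω | c ≤ Y ω}, w ω * |Y ω| ∂μ :=
      setIntegral_nonneg (hA c) fun ω _ => mul_nonneg (hwpos ω).le (abs_nonneg _)
    have hNle : N c ≤ Λ * ∫ ω, w ω * |Y ω| ∂μ := by
      simp only [hNdef]
      nlinarith [h1, h2, h3, h4]
    exact div_le_div₀ (by nlinarith [h4, h3]) hNle (mul_pos hΛi hEw) (hDge c)
  -- key step: t ≤ N t / D t
  have hkey : t ≤ N t / D t := by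
    set A := {ω | t ≤ Y ω} with hAdef
    have h0 : ∫ ω, wt ω * (Y ω - t) ∂μ = 0 := by
      have he : (fun ω => wt ω * (Y ω - t)) = fun ω => wt ω * Y ω - t * wt ω :=
        funext fun ω => by ring
      rw [he, integral_sub hwtYint (hwtint.const_mul t), integral_const_mul]
      rw [htdef, div_mul_cancel₀ _ hS.ne']
      ring
    have hint1 : Integrable (fun ω => wt ω * (Y ω - t)) μ := by
      have he : (fun ω => wt ω * (Y ω - t)) = fun ω => wt ω * Y ω - t * wt ω :=
        funext fun ω => by ring
      rw [he]; exact hwtYint.sub (hwtint.const_mul t)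
    have hint2 : Integrable (fun ω => Λ * w ω * (Y ω - t)) μ := by
      have he : (fun ω => Λ * w ω * (Y ω - t)) = fun ω => Λ * (w ω * Y ω) - (t * Λ) * w ω :=
        funext fun ω => by ring
      rw [he]; exact (hwYint.const_mul Λ).sub (hwint.const_mul (t * Λ))
    have hint3 : Integrable (fun ω => Λ⁻¹ * w ω * (Y ω - t)) μ := by
      have he : (fun ω => Λ⁻¹ * w ω * (Y ω - t)) = fun ω => Λ⁻¹ * (w ω * Y ω) - (t * Λ⁻¹) * w ω :=
        funext fun ω => by ring
      rw [he]; exact (hwYint.const_mul Λ⁻¹).sub (hwint.const_mul (t * Λ⁻¹))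
    have hsplit0 : (∫ ω in A, wt ω * (Y ω - t) ∂μ) + (∫ ω in Aᶜ, wt ω * (Y ω - t) ∂μ)
        = 0 := by rw [integral_add_compl (hA t) hint1]; exact h0
    have h1 : (∫ ω in A, wt ω * (Y ω - t) ∂μ) ≤ ∫ ω in A, Λ * w ω * (Y ω - t) ∂μ := by
      refine setIntegral_mono_on hint1.integrableOn hint2.integrableOn (hA t) ?_
      intro ω hω
      have hY : t ≤ Y ω := hω
      exact mul_le_mul_of_nonneg_right (hbox ω).2 (sub_nonneg.mpr hY)
    have h2 : (∫ ω in Aᶜ, wt ω * (Y ω - t) ∂μ) ≤ ∫ ω in Aᶜ, Λ⁻¹ * w ω * (Y ω - t) ∂μ := by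
      refine setIntegral_mono_on hint1.integrableOn hint3.integrableOn (hA t).compl ?_
      intro ω hω
      have hY : Y ω - t ≤ 0 := by
        simp only [hAdef, Set.mem_compl_iff, Set.mem_setOf_eq, not_le] at hω
        linarith
      exact mul_le_mul_of_nonpos_right (hbox ω).1 hY
    have he1 : (∫ ω in A, Λ * w ω * (Y ω - t) ∂μ)
        = Λ * (∫ ω in A, w ω * Y ω ∂μ) - t * (Λ * ∫ ω in A, w ω ∂μ) := by
      have he : (fun ω => Λ * w ω * (Y ω - t)) = fun ω => Λ * (w ω * Y ω) - (t * Λ) * w ω :=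
        funext fun ω => by ring
      rw [he, integral_sub (hwYint.const_mul Λ).integrableOn (hwint.const_mul (t * Λ)).integrableOn,
        integral_const_mul, integral_const_mul]
      ring
    have he2 : (∫ ω in Aᶜ, Λ⁻¹ * w ω * (Y ω - t) ∂μ)
        = Λ⁻¹ * (∫ ω in Aᶜ, w ω * Y ω ∂μ) - t * (Λ⁻¹ * ∫ ω in Aᶜ, w ω ∂μ) := by
      have he : (fun ω => Λ⁻¹ * w ω * (Y ω - t)) = fun ω => Λ⁻¹ * (w ω * Y ω) - (t * Λ⁻¹) * w ω :=
        funext fun ω => by ring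
      rw [he, integral_sub (hwYint.const_mul Λ⁻¹).integrableOn
        (hwint.const_mul (t * Λ⁻¹)).integrableOn, integral_const_mul, integral_const_mul]
      ring
    have hmain : t * D t ≤ N t := by
      have := hsplit0
      simp only [hNdef, hDdef, hAdef] at *
      nlinarith [h1, h2, he1, he2]
    rw [le_div_iff₀ (hD t)]
    exact hmain
  -- conclude
  have hgoal : T / S ≤ ⨆ c, N c / D c := le_trans hkey (le_ciSup hbdd t)
  simp only [hcompl]
  exact hgoal
end

section
/- Let g: {0,1,...,m} → ℝ be defined by g(a) = N(a)/D(a), where N(a) = Σ_{i≤a} Λw_iY_i + Σ_{i>a} Λ^{-1}w_iY_i and D(a) = Σ_{i≤a} Λw_i + Σ_{i>a} Λ^{-1}w_i, with Y₁ ≥ ... ≥ Y_m, w_i > 0, Λ > 1. Then g(a+1) ≥ g(a) if and only if Y_{a+1} ≥ g(a). -/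
/-!
Raising the weight of the `(a+1)`-th observation from `Λ⁻¹ w` to `Λ w` adds the same positive
amount `c = (Λ - Λ⁻¹) w_{a+1}` to the denominator and `c Y_{a+1}` to the numerator of the ratio.
A mediant `(N + c y) / (D + c)` lies between `N / D` and `y`, so the ratio increases exactly when
`y = Y_{a+1}` is at least the current ratio.
-/

open Finset

theorem div_le_add_mul_div_add_iff {K : Type*} [Field K] [LinearOrder K] [IsStrictOrderedRing K]
    {N D c y : K} (hD : 0 < D) (hc : 0 < c) :
    N / D ≤ (N + c * y) / (D + c) ↔ N / D ≤ y := by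
  rw [div_le_div_iff₀ hD (by positivity), div_le_iff₀ hD]
  constructor <;> intro h <;> nlinarith

theorem sum_ite_lt_succ_mul {R : Type*} [CommRing R] {m a : ℕ} (ha : a < m) (x y : R)
    (f : Fin m → R) :
    ∑ i : Fin m, (if (i : ℕ) < a + 1 then x else y) * f i =
      ∑ i : Fin m, (if (i : ℕ) < a then x else y) * f i + (x - y) * f ⟨a, ha⟩ := by
  have hterm : ∀ i : Fin m, (if (i : ℕ) < a + 1 then x else y) * f i =
      (if (i : ℕ) < a then x else y) * f i + if i = ⟨a, ha⟩ then (x - y) * f i else 0 := by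
    intro i
    rcases lt_trichotomy (i : ℕ) a with h | rfl | h
    · simp [h, Nat.lt_succ_of_lt h, Fin.ext_iff, h.ne]
    · simp only [Nat.lt_succ_self, lt_irrefl, if_true, if_false]
      ring
    · simp [h.le.not_gt, (Nat.succ_le_of_lt h).not_gt, Fin.ext_iff, h.ne']
  rw [sum_congr rfl fun i _ => hterm i, sum_add_distrib, sum_ite_eq' univ]
  simp

theorem sum_ite_mul_pos {m : ℕ} (hm : 0 < m) {x y : ℝ} (hx : 0 < x) (hy : 0 < y)
    (P : Fin m → Prop) [DecidablePred P] {w : Fin m → ℝ} (hw : ∀ i, 0 < w i) :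
    0 < ∑ i : Fin m, (if P i then x else y) * w i :=
  sum_pos (fun i _ => mul_pos (by split_ifs <;> assumption) (hw i)) ⟨⟨0, hm⟩, mem_univ _⟩

theorem stmt_19_general (m : ℕ) (Y w : Fin m → ℝ)
    (hw : ∀ i, 0 < w i)
    (Λ : ℝ) (hΛ : 1 < Λ) (a : ℕ) (ha : a < m) :
    let g : ℕ → ℝ := fun b =>
      (∑ i : Fin m, (if (i : ℕ) < b then Λ else Λ⁻¹) * w i * Y i) /
        (∑ i : Fin m, (if (i : ℕ) < b then Λ else Λ⁻¹) * w i)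
    (g a ≤ g (a + 1) ↔ g a ≤ Y ⟨a, ha⟩) := by
  intro g
  have hΛpos : 0 < Λ := zero_lt_one.trans hΛ
  have hc : 0 < (Λ - Λ⁻¹) * w ⟨a, ha⟩ :=
    mul_pos (sub_pos.2 ((inv_lt_one_of_one_lt₀ hΛ).trans hΛ)) (hw _)
  have hN := sum_ite_lt_succ_mul ha Λ Λ⁻¹ fun i => w i * Y i
  simp only [← mul_assoc] at hN
  simp only [g, hN, sum_ite_lt_succ_mul ha Λ Λ⁻¹ w]
  exact div_le_add_mul_div_add_iff
    (sum_ite_mul_pos (a.zero_le.trans_lt ha) hΛpos (inv_pos.2 hΛpos) _ hw) hc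

theorem stmt_19 (m : ℕ) (Y w : Fin m → ℝ)
    (hY : ∀ i j : Fin m, i ≤ j → Y j ≤ Y i) (hw : ∀ i, 0 < w i)
    (Λ : ℝ) (hΛ : 1 < Λ) (a : ℕ) (ha : a < m) :
    let g : ℕ → ℝ := fun b =>
      (∑ i : Fin m, (if (i : ℕ) < b then Λ else Λ⁻¹) * w i * Y i) /
        (∑ i : Fin m, (if (i : ℕ) < b then Λ else Λ⁻¹) * w i)
    (g a ≤ g (a + 1) ↔ g a ≤ Y ⟨a, ha⟩) :=
  stmt_19_general m Y w hw Λ hΛ a ha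
end
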